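/- arXiv:2106.03147 — 3 statements merged into one kernel-verified Lean document; each statement's English description precedes it below -/
import Mathlib

section
/- Let K : M → (0,∞) be a measurable function on a measure space (M, μ) with a measure-preserving transformation f, and suppose that for a.e. x the sum ∑_{n ∈ ℤ} K(f^n x) e^{-ε|n|} is finite. Then there exists a measurable function K_ε : M → (0,∞) with K(x) ≤ K_ε(x) and e^{-ε} K_ε(x) ≤ K_ε(f x) ≤ e^{ε} K_ε(x) for a.e. x. -/
/-!
Take `K_ε(x) = ∑_{n ∈ ℤ} K(fⁿ x) e^{-ε|n|}`. The `n = 0` term gives `K ≤ K_ε`, and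
`K_ε(f x) = ∑ₙ K(fⁿ⁺¹ x) e^{-ε|n|}` differs from `K_ε(x)` only by moving each weight
from `n + 1` to `n`, which changes it by a factor in `[e^{-ε}, e^{ε}]`. Summing in `ℝ≥0∞`
makes these inequalities hold everywhere and measurability automatic; the a.e. finiteness
of the sum lets us pass to `ℝ`.
-/

open MeasureTheory

open scoped ENNReal

theorem Equiv.Perm.measurable_zpow {M : Type*} [MeasurableSpace M] {f : Equiv.Perm M}
    (hf : Measurable f) (hf_symm : Measurable f.symm) : ∀ n : ℤ, Measurable ⇑(f ^ n)
  | .ofNat n => by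
    simpa only [Int.ofNat_eq_natCast, zpow_natCast, Equiv.Perm.coe_pow] using hf.iterate n
  | .negSucc n => by
    simpa only [zpow_negSucc, ← inv_pow, Equiv.Perm.coe_pow, Equiv.Perm.inv_def] using
      hf_symm.iterate (n + 1)

theorem Real.exp_neg_mul_abs_le_exp_mul_abs_sub_mul {ε : ℝ} (hε : 0 ≤ ε) (x y : ℝ) :
    Real.exp (-ε * |x|) ≤ Real.exp (ε * |x - y|) * Real.exp (-ε * |y|) := by
  rw [← Real.exp_add, Real.exp_le_exp]
  nlinarith [abs_sub_abs_le_abs_sub y x, abs_sub_comm x y]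

theorem Real.exp_neg_mul_abs_sub_mul_le {ε : ℝ} (hε : 0 ≤ ε) (x y : ℝ) :
    Real.exp (-ε * |x - y|) * Real.exp (-ε * |y|) ≤ Real.exp (-ε * |x|) := by
  rw [← Real.exp_add, Real.exp_le_exp]
  nlinarith [abs_sub_abs_le_abs_sub x y]

theorem ENNReal.tsum_comp_add_one_mul_le {a w : ℤ → ℝ≥0∞} {c : ℝ≥0∞}
    (h : ∀ n, w n ≤ c * w (n + 1)) : ∑' n, a (n + 1) * w n ≤ c * ∑' n, a n * w n :=
  calc ∑' n, a (n + 1) * w n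
      ≤ ∑' n, c * (a (n + 1) * w (n + 1)) :=
        ENNReal.tsum_le_tsum fun n => by rw [mul_left_comm]; gcongr; exact h n
    _ = c * ∑' n, a n * w n := by
        rw [ENNReal.tsum_mul_left]
        exact congrArg (c * ·) ((Equiv.addRight 1).tsum_eq fun n => a n * w n)

theorem ENNReal.mul_tsum_le_tsum_comp_add_one_mul {a w : ℤ → ℝ≥0∞} {c : ℝ≥0∞}
    (h : ∀ n, c * w (n + 1) ≤ w n) : c * ∑' n, a n * w n ≤ ∑' n, a (n + 1) * w n :=
  calc c * ∑' n, a n * w n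
      = ∑' n, a (n + 1) * (c * w (n + 1)) := by
        rw [← (Equiv.addRight 1).tsum_eq fun n => a n * w n, ← ENNReal.tsum_mul_left]
        simp only [Equiv.coe_addRight, mul_left_comm]
    _ ≤ ∑' n, a (n + 1) * w n := ENNReal.tsum_le_tsum fun n => by gcongr; exact h n

namespace Equiv.Perm

variable {M : Type*} (f : Equiv.Perm M) (ε : ℝ) (K : M → ℝ)

noncomputable def orbitExpSum (x : M) : ℝ≥0∞ :=
  ∑' n : ℤ, ENNReal.ofReal (K ((f ^ n) x)) * ENNReal.ofReal (Real.exp (-ε * |(n : ℝ)|))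

theorem orbitExpSum_apply_eq_tsum_zpow_add_one (x : M) :
    orbitExpSum f ε K (f x) =
      ∑' n : ℤ, ENNReal.ofReal (K ((f ^ (n + 1)) x)) *
        ENNReal.ofReal (Real.exp (-ε * |(n : ℝ)|)) := by
  simp only [orbitExpSum, zpow_add_one, Perm.mul_apply]

variable {ε}

theorem orbitExpSum_apply_le (hε : 0 ≤ ε) (x : M) :
    orbitExpSum f ε K (f x) ≤ ENNReal.ofReal (Real.exp ε) * orbitExpSum f ε K x := by
  rw [orbitExpSum_apply_eq_tsum_zpow_add_one]
  refine ENNReal.tsum_comp_add_one_mul_le fun n => ?_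
  rw [← ENNReal.ofReal_mul (Real.exp_pos _).le]
  refine ENNReal.ofReal_le_ofReal ?_
  simpa using Real.exp_neg_mul_abs_le_exp_mul_abs_sub_mul hε (n : ℝ) (n + 1)

theorem le_orbitExpSum_apply (hε : 0 ≤ ε) (x : M) :
    ENNReal.ofReal (Real.exp (-ε)) * orbitExpSum f ε K x ≤ orbitExpSum f ε K (f x) := by
  rw [orbitExpSum_apply_eq_tsum_zpow_add_one]
  refine ENNReal.mul_tsum_le_tsum_comp_add_one_mul fun n => ?_
  rw [← ENNReal.ofReal_mul (Real.exp_pos _).le]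
  refine ENNReal.ofReal_le_ofReal ?_
  simpa using Real.exp_neg_mul_abs_sub_mul_le hε (n : ℝ) (n + 1)

theorem ofReal_le_orbitExpSum (x : M) : ENNReal.ofReal (K x) ≤ orbitExpSum f ε K x := by
  unfold orbitExpSum
  convert ENNReal.le_tsum (0 : ℤ) using 1
  simp

theorem orbitExpSum_ne_top {x : M} (hK : ∀ n : ℤ, 0 ≤ K ((f ^ n) x))
    (hsum : Summable fun n : ℤ => K ((f ^ n) x) * Real.exp (-ε * |(n : ℝ)|)) :
    orbitExpSum f ε K x ≠ ∞ := by
  have hnonneg (n : ℤ) : 0 ≤ K ((f ^ n) x) * Real.exp (-ε * |(n : ℝ)|) :=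
    mul_nonneg (hK n) (Real.exp_pos _).le
  simp only [orbitExpSum, ← ENNReal.ofReal_mul (hK _),
    ← ENNReal.ofReal_tsum_of_nonneg hnonneg hsum, ENNReal.ofReal_ne_top, ne_eq, not_false_eq_true]

theorem measurable_orbitExpSum [MeasurableSpace M] (hf : Measurable f) (hf_symm : Measurable f.symm)
    (hK : Measurable K) : Measurable (orbitExpSum f ε K) :=
  Measurable.tsum fun n =>
    (hK.comp (measurable_zpow hf hf_symm n)).ennreal_ofReal.mul_const _

end Equiv.Perm

open Equiv.Perm in
theorem exists_tempered_dominating_function_general {M : Type*} [MeasurableSpace M]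
    (μ : Measure M) (f : Equiv.Perm M)
    (hf : Measurable (f : M → M)) (hfsymm : Measurable (f.symm : M → M))
    (ε : ℝ) (hε : 0 < ε) (K : M → ℝ) (hK : Measurable K) (hKpos : ∀ x, 0 < K x)
    (hsum : ∀ᵐ x ∂μ, Summable fun n : ℤ => K ((f ^ n) x) * Real.exp (-ε * |(n : ℝ)|)) :
    ∃ Kε : M → ℝ, Measurable Kε ∧
      ∀ᵐ x ∂μ, 0 < Kε x ∧ K x ≤ Kε x ∧
        Real.exp (-ε) * Kε x ≤ Kε (f x) ∧ Kε (f x) ≤ Real.exp ε * Kε x := by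
  refine ⟨fun x => (orbitExpSum f ε K x).toReal,
    (measurable_orbitExpSum f K hf hfsymm hK).ennreal_toReal, ?_⟩
  filter_upwards [hsum] with x hx
  have hx_top := orbitExpSum_ne_top f K (fun n => (hKpos _).le) hx
  have hfx_top : orbitExpSum f ε K (f x) ≠ ∞ :=
    ne_top_of_le_ne_top (ENNReal.mul_ne_top ENNReal.ofReal_ne_top hx_top)
      (orbitExpSum_apply_le f K hε.le x)
  have hK_le : ENNReal.ofReal (K x) ≤ orbitExpSum f ε K x := ofReal_le_orbitExpSum f K x
  refine ⟨ENNReal.toReal_pos ((ENNReal.ofReal_pos.2 (hKpos x)).trans_le hK_le).ne' hx_top,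
    (ENNReal.ofReal_le_iff_le_toReal hx_top).1 hK_le, ?_, ?_⟩
  · rw [← ENNReal.toReal_ofReal (Real.exp_pos (-ε)).le, ← ENNReal.toReal_mul]
    exact ENNReal.toReal_mono hfx_top (le_orbitExpSum_apply f K hε.le x)
  · rw [← ENNReal.toReal_ofReal (Real.exp_pos ε).le, ← ENNReal.toReal_mul]
    exact ENNReal.toReal_mono (ENNReal.mul_ne_top ENNReal.ofReal_ne_top hx_top)
      (orbitExpSum_apply_le f K hε.le x)

/-- If `K : M → (0,∞)` is measurable and for a.e. `x` the sum
`∑_{n ∈ ℤ} K(fⁿ x) e^{-ε|n|}` is finite, then there is a measurable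
function `K_ε ≥ K` which is `ε`-tempered along orbits:
`e^{-ε} K_ε(x) ≤ K_ε(f x) ≤ e^{ε} K_ε(x)` a.e. -/
theorem exists_tempered_dominating_function {M : Type*} [MeasurableSpace M]
    (μ : Measure M) (f : Equiv.Perm M)
    (hf : Measurable (f : M → M)) (hfsymm : Measurable (f.symm : M → M))
    (hpres : MeasurePreserving (f : M → M) μ μ)
    (ε : ℝ) (hε : 0 < ε) (K : M → ℝ) (hK : Measurable K) (hKpos : ∀ x, 0 < K x)
    (hsum : ∀ᵐ x ∂μ, Summable fun n : ℤ => K ((f ^ n) x) * Real.exp (-ε * |(n : ℝ)|)) :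
    ∃ Kε : M → ℝ, Measurable Kε ∧
      ∀ᵐ x ∂μ, 0 < Kε x ∧ K x ≤ Kε x ∧
        Real.exp (-ε) * Kε x ≤ Kε (f x) ∧ Kε (f x) ≤ Real.exp ε * Kε x :=
  exists_tempered_dominating_function_general μ f hf hfsymm ε hε K hK hKpos hsum
end

section
/- Let f be a measure-preserving map of a compact metric probability space (M, μ) which is exponentially mixing for C^r observables with rate η, i.e. |∫ φ (ψ∘f^n) dμ − ∫φ dμ ∫ψ dμ| ≤ C e^{-ηn} ‖φ‖_{C^r} ‖ψ‖_{C^r}. If μ is not supported on a single point, then there exist constants c, η̂ > 0 such that for every measurable set B ⊂ M with μ(B) ≥ 1 − c and every n ∈ ℕ, there exists z ∈ B with diam(f^n(O_{e^{-η̂ n}}(z))) ≥ c, where O_r(z) is the ball of radius r centered at z. -/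
/-!
Take two distinct points `u ≠ v` in the support of `μ`. Testing mixing against a Lipschitz cutoff
of the `e^{-ηm/2}`-neighbourhood of a set `T` and a cutoff of a small ball around `w` shows that
the set of centres whose `e^{-ηm/2}`-ball is mapped by `f^m` away from `w` has measure
`O(e^{-ηm/2})`. Hence, for `m ≥ N`, every set of measure `≥ 1/2` contains a centre whose small
ball is stretched by `f^m` across both `u` and `v`, to diameter `≥ d(u, v)/2`. Uniform continuity
of the finitely many iterates `f^k`, `k ≤ N`, carries this back to the times `n < N`.
-/

open MeasureTheory Metric Filter Topology Set
open scoped NNReal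

namespace MeasureTheory.Measure

variable {X : Type*} [TopologicalSpace X] [MeasurableSpace X] [BorelSpace X] [T1Space X]
  [HereditarilyLindelofSpace X] {μ : Measure X} [IsProbabilityMeasure μ]

theorem eq_dirac_of_support_subset_singleton {w : X} (h : μ.support ⊆ {w}) :
    μ = Measure.dirac w := by
  have hw : μ {w}ᶜ = 0 := measure_mono_null (compl_subset_compl.2 h) μ.measure_compl_support
  rw [← Measure.restrict_eq_self_of_ae_mem (measure_eq_zero_iff_ae_notMem.1 hw |>.mono
      fun _ hx ↦ not_not.1 hx), Measure.restrict_singleton,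
    (prob_compl_eq_zero_iff (measurableSet_singleton w)).1 hw, one_smul]

theorem exists_mem_support_ne (h : ∀ z : X, μ ≠ Measure.dirac z) :
    ∃ u ∈ μ.support, ∃ v ∈ μ.support, u ≠ v := by
  obtain ⟨w, hw⟩ := nonempty_support (IsProbabilityMeasure.ne_zero μ)
  by_contra! hne
  exact h w (eq_dirac_of_support_subset_singleton fun v hv ↦ hne v hv w hw)

end MeasureTheory.Measure

section Bump

variable {M : Type*} [MetricSpace M]

noncomputable def bump (s : Set M) (ρ : ℝ) (x : M) : ℝ := max 0 (1 - infDist x s / ρ)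

theorem bump_nonneg (s : Set M) (ρ : ℝ) (x : M) : 0 ≤ bump s ρ x := le_max_left _ _

theorem abs_bump_le_one (s : Set M) {ρ : ℝ} (hρ : 0 ≤ ρ) (x : M) : |bump s ρ x| ≤ 1 := by
  rw [abs_of_nonneg (bump_nonneg s ρ x)]
  exact max_le zero_le_one (sub_le_self _ (div_nonneg infDist_nonneg hρ))

theorem bump_eq_one_of_mem {s : Set M} {x : M} (hx : x ∈ s) (ρ : ℝ) : bump s ρ x = 1 := by
  simp [bump, infDist_zero_of_mem hx]

theorem bump_eq_zero_of_notMem_thickening {s : Set M} (hs : s.Nonempty) {ρ : ℝ} (hρ : 0 < ρ)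
    {x : M} (hx : x ∉ thickening ρ s) : bump s ρ x = 0 := by
  rw [mem_thickening_iff_infDist_lt hs, not_lt] at hx
  exact max_eq_left (sub_nonpos.2 ((one_le_div hρ).2 hx))

theorem lipschitzWith_bump (s : Set M) {ρ : ℝ} (hρ : 0 ≤ ρ) :
    LipschitzWith (Real.toNNReal ρ⁻¹) (bump s ρ) := by
  refine LipschitzWith.const_max (LipschitzWith.of_dist_le_mul fun x y ↦ ?_) 0
  rw [Real.coe_toNNReal _ (inv_nonneg.2 hρ), Real.dist_eq, sub_sub_sub_cancel_left,
    ← sub_div, abs_div, abs_of_nonneg hρ, div_eq_inv_mul, ← Real.dist_eq, dist_comm]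
  exact mul_le_mul_of_nonneg_left (by simpa using (lipschitz_infDist_pt s).dist_le_mul x y)
    (inv_nonneg.2 hρ)

theorem integrable_bump [CompactSpace M] [MeasurableSpace M] [BorelSpace M] (μ : Measure M)
    [IsFiniteMeasure μ] (s : Set M) {ρ : ℝ} (hρ : 0 ≤ ρ) : Integrable (bump s ρ) μ :=
  (lipschitzWith_bump s hρ).continuous.integrable_of_hasCompactSupport
    (HasCompactSupport.of_compactSpace _)

theorem measureReal_le_integral_bump [CompactSpace M] [MeasurableSpace M] [BorelSpace M]
    (μ : Measure M) [IsFiniteMeasure μ] (s : Set M) {ρ : ℝ} (hρ : 0 ≤ ρ) :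
    μ.real s ≤ ∫ x, bump s ρ x ∂μ :=
  calc μ.real s ≤ 1 * μ.real {x | 1 ≤ bump s ρ x} := by
        rw [one_mul]; exact measureReal_mono fun x hx ↦ (bump_eq_one_of_mem hx ρ).ge
    _ ≤ ∫ x, bump s ρ x ∂μ :=
        mul_meas_ge_le_integral_of_nonneg (ae_of_all _ (bump_nonneg s ρ))
          (integrable_bump μ s hρ) 1

theorem measureReal_ball_le_two_mul_integral_bump [CompactSpace M] [MeasurableSpace M]
    [BorelSpace M] (μ : Measure M) [IsFiniteMeasure μ] (w : M) {R : ℝ} (hR : 0 < R) :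
    μ.real (ball w (R / 2)) ≤ 2 * ∫ x, bump {w} R x ∂μ := by
  have hball : ball w (R / 2) ⊆ {x | 2⁻¹ ≤ bump {w} R x} := fun x hx ↦ by
    have : dist x w / R < 2⁻¹ := by
      rw [div_lt_iff₀ hR]; linarith [mem_ball.1 hx]
    show 2⁻¹ ≤ max 0 (1 - infDist x {w} / R)
    exact le_max_of_le_right (by rw [infDist_singleton]; linarith)
  have := mul_meas_ge_le_integral_of_nonneg (ae_of_all _ (bump_nonneg {w} R))
    (integrable_bump μ {w} hR.le) 2⁻¹
  linarith [measureReal_mono (μ := μ) hball]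

end Bump

section Mixing

variable {M : Type*} [MetricSpace M] [MeasurableSpace M]

/-- `a` and `b` bound both the Lipschitz constant and the sup norm; they play the role of the
`C^r` norms. -/
def IsExpMixing (μ : Measure M) (f : M → M) (C η : ℝ) : Prop :=
  ∀ (φ ψ : M → ℝ) (a b : ℝ≥0), LipschitzWith a φ → LipschitzWith b ψ →
    (∀ x, |φ x| ≤ a) → (∀ x, |ψ x| ≤ b) → ∀ n : ℕ,
    |(∫ x, φ x * ψ (f^[n] x) ∂μ) - (∫ x, φ x ∂μ) * ∫ x, ψ x ∂μ| ≤ C * Real.exp (-η * n) * a * b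

variable {μ : Measure M} {f : M → M} {C η : ℝ}

theorem IsExpMixing.integral_mul_integral_le_of_mul_comp_eq_zero (hmix : IsExpMixing μ f C η)
    {φ ψ : M → ℝ} {a b : ℝ≥0} (hφ : LipschitzWith a φ) (hψ : LipschitzWith b ψ)
    (hφ1 : ∀ x, |φ x| ≤ 1) (hψ1 : ∀ x, |ψ x| ≤ 1) {n : ℕ} (h : ∀ x, φ x * ψ (f^[n] x) = 0) :
    (∫ x, φ x ∂μ) * (∫ x, ψ x ∂μ) ≤ C * Real.exp (-η * n) * max (a : ℝ) 1 * max (b : ℝ) 1 := by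
  calc (∫ x, φ x ∂μ) * (∫ x, ψ x ∂μ)
      ≤ |(∫ x, φ x * ψ (f^[n] x) ∂μ) - (∫ x, φ x ∂μ) * ∫ x, ψ x ∂μ| := by
        simp only [h, integral_zero, zero_sub, abs_neg, le_abs_self]
    _ ≤ C * Real.exp (-η * n) * max (a : ℝ) 1 * max (b : ℝ) 1 := by
        simpa only [NNReal.coe_max, NNReal.coe_one] using
          hmix φ ψ (max a 1) (max b 1) (hφ.weaken (le_max_left _ _)) (hψ.weaken (le_max_left _ _))
            (fun x ↦ (hφ1 x).trans (le_max_right _ _)) (fun x ↦ (hψ1 x).trans (le_max_right _ _)) n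

theorem IsExpMixing.measureReal_mul_measureReal_ball_le [CompactSpace M] [BorelSpace M]
    [IsFiniteMeasure μ] (hmix : IsExpMixing μ f C η) (hC : 0 ≤ C) {T : Set M} {w : M} {r R : ℝ}
    (hr : 0 < r) (hR : 0 < R) {n : ℕ} (hT : MapsTo f^[n] (thickening r T) (ball w R)ᶜ) :
    μ.real T * μ.real (ball w (R / 2)) ≤ 2 * C * Real.exp (-η * n) * max r⁻¹ 1 * max R⁻¹ 1 := by
  obtain rfl | hTne := T.eq_empty_or_nonempty
  · simp only [measureReal_empty, zero_mul]
    positivity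
  have hdisj (x : M) : bump T r x * bump {w} R (f^[n] x) = 0 := by
    by_cases hx : x ∈ thickening r T
    · rw [bump_eq_zero_of_notMem_thickening (singleton_nonempty w) hR
        (by simpa [thickening_singleton] using hT hx), mul_zero]
    · rw [bump_eq_zero_of_notMem_thickening hTne hr hx, zero_mul]
  have hmix' := hmix.integral_mul_integral_le_of_mul_comp_eq_zero (lipschitzWith_bump T hr.le)
    (lipschitzWith_bump {w} hR.le) (abs_bump_le_one T hr.le) (abs_bump_le_one {w} hR.le) hdisj
  rw [Real.coe_toNNReal _ (inv_nonneg.2 hr.le), Real.coe_toNNReal _ (inv_nonneg.2 hR.le)] at hmix'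
  calc μ.real T * μ.real (ball w (R / 2))
      ≤ (∫ x, bump T r x ∂μ) * (2 * ∫ x, bump {w} R x ∂μ) :=
        mul_le_mul (measureReal_le_integral_bump μ T hr.le)
          (measureReal_ball_le_two_mul_integral_bump μ w hR) measureReal_nonneg
          (integral_nonneg (bump_nonneg T r))
    _ ≤ 2 * C * Real.exp (-η * n) * max r⁻¹ 1 * max R⁻¹ 1 := by linarith

theorem IsExpMixing.exists_measureReal_le [CompactSpace M] [BorelSpace M] [IsFiniteMeasure μ]
    (hmix : IsExpMixing μ f C η) (hC : 0 ≤ C) (hη : 0 ≤ η) {w : M} (hw : w ∈ μ.support)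
    {R : ℝ} (hR : 0 < R) :
    ∃ K : ℝ, ∀ (n : ℕ) (T : Set M),
      MapsTo f^[n] (thickening (Real.exp (-(η / 2) * n)) T) (ball w R)ᶜ →
        μ.real T ≤ K * Real.exp (-(η / 2) * n) := by
  have hball : 0 < μ.real (ball w (R / 2)) := ENNReal.toReal_pos
    ((Measure.mem_support_iff_forall w).1 hw _ (ball_mem_nhds w (half_pos hR))).ne'
    (measure_ne_top μ _)
  refine ⟨2 * C * max R⁻¹ 1 / μ.real (ball w (R / 2)), fun n T hT ↦ ?_⟩
  set r := Real.exp (-(η / 2) * n)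
  have hr : max r⁻¹ 1 = r⁻¹ :=
    max_eq_left (one_le_inv_iff₀.2 ⟨Real.exp_pos _, Real.exp_le_one_iff.2
      (mul_nonpos_of_nonpos_of_nonneg (by linarith) n.cast_nonneg)⟩)
  have hexp : Real.exp (-η * n) * r⁻¹ = r := by
    rw [← Real.exp_neg, ← Real.exp_add]; congr 1; ring
  rw [div_mul_eq_mul_div, le_div_iff₀ hball]
  calc μ.real T * μ.real (ball w (R / 2))
      ≤ 2 * C * Real.exp (-η * n) * max r⁻¹ 1 * max R⁻¹ 1 :=
        hmix.measureReal_mul_measureReal_ball_le hC (Real.exp_pos _) hR hT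
    _ = 2 * C * max R⁻¹ 1 * r := by rw [hr, mul_assoc (2 * C), hexp]; ring

theorem IsExpMixing.exists_iterate_ball_meets_both_balls [CompactSpace M] [BorelSpace M]
    [IsFiniteMeasure μ] (hmix : IsExpMixing μ f C η) (hC : 0 ≤ C) (hη : 0 < η) {u v : M}
    (hu : u ∈ μ.support) (hv : v ∈ μ.support) {R : ℝ} (hR : 0 < R) {ε : ℝ} (hε : 0 < ε) :
    ∃ N : ℕ, ∀ m ≥ N, ∀ B : Set M, ε ≤ μ.real B → ∃ z ∈ B,
      ∃ x ∈ ball z (Real.exp (-(η / 2) * m)), ∃ y ∈ ball z (Real.exp (-(η / 2) * m)),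
        f^[m] x ∈ ball u R ∧ f^[m] y ∈ ball v R := by
  obtain ⟨Ku, hKu⟩ := hmix.exists_measureReal_le hC hη.le hu hR
  obtain ⟨Kv, hKv⟩ := hmix.exists_measureReal_le hC hη.le hv hR
  have hlim : Tendsto (fun m : ℕ ↦ (Ku + Kv) * Real.exp (-(η / 2) * m)) atTop (𝓝 0) := by
    simpa using (Real.tendsto_exp_atBot.comp
      (tendsto_natCast_atTop_atTop.const_mul_atTop_of_neg (neg_neg_of_pos (half_pos hη)))).const_mul
        (Ku + Kv)
  obtain ⟨N, hN⟩ := eventually_atTop.1 (hlim.eventually_lt_const hε)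
  refine ⟨N, fun m hm B hB ↦ ?_⟩
  by_contra! hmiss
  set r := Real.exp (-(η / 2) * m)
  let bad (w : M) : Set M := {z | MapsTo f^[m] (ball z r) (ball w R)ᶜ}
  have hbad (w : M) : MapsTo f^[m] (thickening r (bad w)) (ball w R)ᶜ := fun x hx ↦ by
    obtain ⟨z, hz, hxz⟩ := mem_thickening_iff.1 hx
    exact hz hxz
  have hcover : B ⊆ bad u ∪ bad v := fun z hz ↦ by
    by_contra! h
    simp only [mem_union, not_or, bad, MapsTo, mem_ofPred_eq, mem_compl_iff, not_forall,
      not_not] at h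
    obtain ⟨⟨x, hx, hxu⟩, ⟨y, hy, hyv⟩⟩ := h
    exact hmiss z hz x hx y hy hxu hyv
  have hsmall := calc ε ≤ μ.real B := hB
    _ ≤ μ.real (bad u ∪ bad v) := measureReal_mono hcover
    _ ≤ μ.real (bad u) + μ.real (bad v) := measureReal_union_le _ _
    _ ≤ Ku * r + Kv * r := add_le_add (hKu m _ (hbad u)) (hKv m _ (hbad v))
    _ = (Ku + Kv) * r := by ring
  linarith [hN m hm]

end Mixing

theorem Continuous.exists_pos_forall_le_dist_of_le_dist_iterate {M : Type*} [MetricSpace M]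
    [CompactSpace M] {f : M → M} (hf : Continuous f) (N : ℕ) {ε : ℝ} (hε : 0 < ε) :
    ∃ d > 0, ∀ k ≤ N, ∀ x y : M, ε ≤ dist (f^[k] x) (f^[k] y) → d ≤ dist x y := by
  have : UniformEquicontinuous fun k : Fin (N + 1) ↦ f^[k] :=
    uniformEquicontinuous_finite.2 fun k ↦
      CompactSpace.uniformContinuous_of_continuous (hf.iterate k)
  obtain ⟨d, hd, hfd⟩ := Metric.uniformEquicontinuous_iff.1 this ε hε
  refine ⟨d, hd, fun k hk x y hε_le ↦ ?_⟩
  by_contra! hlt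
  exact (hfd x y hlt ⟨k, Nat.lt_succ_of_le hk⟩).not_ge hε_le

theorem expmixing_macroscopic_images_general {M : Type*} [MetricSpace M] [CompactSpace M]
    [MeasurableSpace M] [BorelSpace M]
    (μ : Measure M) [IsProbabilityMeasure μ]
    (f : M → M) (hf : Continuous f)
    (hsupp : ∀ z : M, μ ≠ Measure.dirac z)
    (C η : ℝ) (hC : 0 < C) (hη : 0 < η)
    (hmix : ∀ (φ ψ : M → ℝ) (a b : ℝ≥0), LipschitzWith a φ → LipschitzWith b ψ →
      (∀ x, |φ x| ≤ a) → (∀ x, |ψ x| ≤ b) → ∀ n : ℕ,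
      |(∫ x, φ x * ψ (f^[n] x) ∂μ) - (∫ x, φ x ∂μ) * ∫ x, ψ x ∂μ|
        ≤ C * Real.exp (-η * n) * a * b) :
    ∃ c > (0:ℝ), ∃ ηhat > (0:ℝ), ∀ B : Set M, MeasurableSet B →
      1 - c ≤ (μ B).toReal → ∀ n : ℕ, ∃ z ∈ B,
        c ≤ Metric.diam (f^[n] '' Metric.ball z (Real.exp (-ηhat * n))) := by
  obtain ⟨u, hu, v, hv, huv⟩ := μ.exists_mem_support_ne hsupp
  have hΔ : 0 < dist u v := dist_pos.2 huv
  obtain ⟨N, hN⟩ := IsExpMixing.exists_iterate_ball_meets_both_balls hmix hC.le hη hu hv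
    (R := dist u v / 4) (by positivity) one_half_pos
  obtain ⟨d, hd, hfd⟩ := hf.exists_pos_forall_le_dist_of_le_dist_iterate N (half_pos hΔ)
  refine ⟨min (1 / 2) d, by positivity, η / 2, by positivity, fun B _ hB n ↦ ?_⟩
  obtain ⟨z, hz, x, hx, y, hy, hxu, hyv⟩ :=
    hN (max n N) (le_max_right _ _) B
      (by rw [measureReal_def]; linarith [min_le_left (1 / 2 : ℝ) d])
  have hsep : dist u v / 2 ≤ dist (f^[max n N] x) (f^[max n N] y) := by
    linarith [dist_triangle4 u (f^[max n N] x) (f^[max n N] y) v, mem_ball'.1 hxu, mem_ball.1 hyv]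
  have hd_le : d ≤ dist (f^[n] x) (f^[n] y) := by
    refine hfd (max n N - n) (by omega) _ _ ?_
    rwa [← Function.iterate_add_apply, ← Function.iterate_add_apply,
      Nat.sub_add_cancel (le_max_left n N)]
  have hball : ball z (Real.exp (-(η / 2) * ↑(max n N))) ⊆ ball z (Real.exp (-(η / 2) * n)) :=
    ball_subset_ball (Real.exp_le_exp.2 (mul_le_mul_of_nonpos_left
      (Nat.cast_le.2 (le_max_left n N)) (by linarith)))
  refine ⟨z, hz, ?_⟩
  calc min (1 / 2) d ≤ dist (f^[n] x) (f^[n] y) := (min_le_right _ _).trans hd_le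
    _ ≤ diam (f^[n] '' ball z (Real.exp (-(η / 2) * n))) :=
      dist_le_diam_of_mem isBounded_of_compactSpace (mem_image_of_mem _ (hball hx))
        (mem_image_of_mem _ (hball hy))

/-- If `f` preserves a probability measure `μ` on a compact metric space, is
exponentially mixing for (Lipschitz-)smooth observables, and `μ` is not supported
on a single point, then there are `c, η̂ > 0` such that for every set `B` of
measure at least `1 - c` and every `n`, some ball of radius `e^{-η̂ n}` centered
in `B` has image of diameter at least `c` under `fⁿ`. -/
theorem expmixing_macroscopic_images {M : Type*} [MetricSpace M] [CompactSpace M]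
    [MeasurableSpace M] [BorelSpace M]
    (μ : Measure M) [IsProbabilityMeasure μ]
    (f : M → M) (hf : Continuous f) (hpres : MeasurePreserving f μ μ)
    (hsupp : ∀ z : M, μ ≠ Measure.dirac z)
    (C η : ℝ) (hC : 0 < C) (hη : 0 < η)
    (hmix : ∀ (φ ψ : M → ℝ) (a b : ℝ≥0), LipschitzWith a φ → LipschitzWith b ψ →
      (∀ x, |φ x| ≤ a) → (∀ x, |ψ x| ≤ b) → ∀ n : ℕ,
      |(∫ x, φ x * ψ (f^[n] x) ∂μ) - (∫ x, φ x ∂μ) * ∫ x, ψ x ∂μ|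
        ≤ C * Real.exp (-η * n) * a * b) :
    ∃ c > (0:ℝ), ∃ ηhat > (0:ℝ), ∀ B : Set M, MeasurableSet B →
      1 - c ≤ (μ B).toReal → ∀ n : ℕ, ∃ z ∈ B,
        c ≤ Metric.diam (f^[n] '' Metric.ball z (Real.exp (-ηhat * n))) :=
  expmixing_macroscopic_images_general μ f hf hsupp C η hC hη hmix
end

section
/- Let φ : GL(ℝ^D) × Grass^u(ℝ^D) → ℝ be φ(A, E) = log|det(A|_E)|, the logarithm of the absolute Jacobian of A restricted to the u-dimensional subspace E (with respect to Euclidean inner products). Fix C₀ > 0. There is a constant N(C₀) such that if ‖A‖, ‖B‖, ‖A^{-1}‖, ‖B^{-1}‖ ≤ C₀ and E, F are graphs of linear maps L_E, L_F : ℝ^a → ℝ^b (where ℝ^D = ℝ^a × ℝ^b and a = u), then |φ(A, E) − φ(B, F)| ≤ N(C₀)(‖A − B‖ + ‖L_E − L_F‖). -/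
/-!
Writing `gᵢ = (eᵢ, L eᵢ)`, `logJac A L = ½ (log det Gram (A g) - log det Gram g)`. If two families
satisfy `‖∑ xᵢ uᵢ‖ ≤ c ‖∑ xᵢ wᵢ‖` for all `x`, then `Gram u ≤ c² Gram w` in the Loewner order, hence
`det Gram u ≤ c^(2a) det Gram w`. The vectors `A (y, L_E y)` and `B (y, L_F y)` differ by at most
`(‖A - B‖ + C₀ ‖L_E - L_F‖) ‖(y, L_E y)‖ ≤ C₀ (‖A - B‖ + C₀ ‖L_E - L_F‖) ‖A (y, L_E y)‖`, so the two
families are comparable in both directions with `c = 1 + C₀ (‖A - B‖ + C₀ ‖L_E - L_F‖)`, and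
`log c ≤ c - 1` gives the Lipschitz bound. The denominator is the case `A = B = id`.
-/

open scoped RealInnerProductSpace

noncomputable section

/-- `ℝ^D = ℝ^a × ℝ^b` with the Euclidean (ℓ²) inner product. -/
abbrev EucProd (a b : ℕ) :=
  WithLp 2 (EuclideanSpace ℝ (Fin a) × EuclideanSpace ℝ (Fin b))

/-- The natural basis `(e_i, L e_i)` of the graph of `L : ℝ^a → ℝ^b`. -/
def graphBasis {a b : ℕ}
    (L : EuclideanSpace ℝ (Fin a) →L[ℝ] EuclideanSpace ℝ (Fin b)) (i : Fin a) :
    EucProd a b :=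
  (WithLp.equiv 2 (EuclideanSpace ℝ (Fin a) × EuclideanSpace ℝ (Fin b))).symm
    (EuclideanSpace.single i 1, L (EuclideanSpace.single i 1))

/-- Gram matrix of a family of vectors. -/
def gramMat {a b : ℕ} (v : Fin a → EucProd a b) : Matrix (Fin a) (Fin a) ℝ :=
  Matrix.of fun i j => (inner ℝ (v i) (v j) : ℝ)

/-- `φ(A, E) = log |det (A|_E)|`, where `E` is the graph of `L` and the determinant
of `A : E → A(E)` is computed with respect to Euclidean structures, via the Gram
matrix formula `|det(A|_E)|² = det Gram(A g_i) / det Gram(g_i)` for the graph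
parametrization `g_i = (e_i, L e_i)` of `E`. -/
def logJac {a b : ℕ} (A : EucProd a b →L[ℝ] EucProd a b)
    (L : EuclideanSpace ℝ (Fin a) →L[ℝ] EuclideanSpace ℝ (Fin b)) : ℝ :=
  (1 / 2) * Real.log
    ((gramMat fun i => A (graphBasis L i)).det / (gramMat (graphBasis L)).det)

open scoped MatrixOrder

namespace Matrix

variable {n : Type*} [Fintype n] [DecidableEq n]

theorem det_le_one_of_nonneg_of_le_one {Z : Matrix n n ℝ} (hZ : 0 ≤ Z) (hZ1 : Z ≤ 1) :
    Z.det ≤ 1 := by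
  have hZ' := nonneg_iff_posSemidef.1 hZ
  rw [hZ'.isHermitian.det_eq_prod_eigenvalues]
  have hspec := (le_algebraMap_iff_spectrum_le (r := (1 : ℝ)) (a := Z)).1 (by simpa using hZ1)
  exact Finset.prod_le_one (fun i _ => hZ'.eigenvalues_nonneg i)
    fun i _ => hspec _ (hZ'.isHermitian.eigenvalues_mem_spectrum_real i)

theorem det_le_det_of_le {X Y : Matrix n n ℝ} (hX : 0 ≤ X) (hY : Y.PosDef) (hXY : X ≤ Y) :
    X.det ≤ Y.det := by
  set S := CFC.sqrt Y
  have hSS : S * S = Y := CFC.sqrt_mul_sqrt_self Y hY.posSemidef.nonneg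
  have hSdet : IsUnit S.det := by
    refine isUnit_iff_ne_zero.2 fun h => hY.det_pos.ne' ?_
    rw [← hSS, det_mul, h, zero_mul]
  have hSinv : star S⁻¹ = S⁻¹ := by
    rw [star_eq_conjTranspose, conjTranspose_nonsing_inv, ← star_eq_conjTranspose,
      (CFC.sqrt_nonneg Y).isSelfAdjoint.star_eq]
  have hZ1 : S⁻¹ * X * S⁻¹ ≤ 1 := by
    have := star_left_conjugate_le_conjugate hXY S⁻¹
    rwa [hSinv, ← hSS, ← mul_assoc, nonsing_inv_mul _ hSdet, one_mul,
      mul_nonsing_inv _ hSdet] at this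
  have hZ0 : 0 ≤ S⁻¹ * X * S⁻¹ := by
    simpa [hSinv] using star_left_conjugate_nonneg hX S⁻¹
  have hZdet : (S⁻¹ * X * S⁻¹).det * Y.det = X.det := by
    have := hSdet.ne_zero
    rw [← hSS, det_mul, det_mul, det_mul, det_nonsing_inv, Ring.inverse_eq_inv']
    field_simp
  calc X.det = (S⁻¹ * X * S⁻¹).det * Y.det := hZdet.symm
    _ ≤ 1 * Y.det := by
      gcongr
      exacts [hY.det_pos.le, det_le_one_of_nonneg_of_le_one hZ0 hZ1]
    _ = Y.det := one_mul _

variable {E ι : Type*} [NormedAddCommGroup E] [InnerProductSpace ℝ E] [Fintype ι]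

theorem gram_le_sq_smul_gram {u w : ι → E} {c : ℝ}
    (h : ∀ x : ι → ℝ, ‖∑ i, x i • u i‖ ≤ c * ‖∑ i, x i • w i‖) :
    gram ℝ u ≤ c ^ 2 • gram ℝ w := by
  rw [Matrix.le_iff]
  refine .of_dotProduct_mulVec_nonneg
    (((isHermitian_gram ℝ w).smul (IsSelfAdjoint.all _)).sub (isHermitian_gram ℝ u)) fun x => ?_
  rw [sub_mulVec, dotProduct_sub, smul_mulVec, dotProduct_smul, star_dotProduct_gram_mulVec,
    star_dotProduct_gram_mulVec, real_inner_self_eq_norm_sq, real_inner_self_eq_norm_sq,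
    smul_eq_mul, sub_nonneg, ← mul_pow]
  exact pow_le_pow_left₀ (norm_nonneg _) (h x) 2

variable [DecidableEq ι]

theorem det_gram_le_of_norm_sum_le {u w : ι → E} (hw : LinearIndependent ℝ w) {c : ℝ}
    (hc : 0 < c) (h : ∀ x : ι → ℝ, ‖∑ i, x i • u i‖ ≤ c * ‖∑ i, x i • w i‖) :
    (gram ℝ u).det ≤ c ^ (2 * Fintype.card ι) * (gram ℝ w).det := by
  have := det_le_det_of_le (posSemidef_gram ℝ u).nonneg
    ((posDef_gram_of_linearIndependent hw).smul (pow_pos hc 2)) (gram_le_sq_smul_gram h)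
  rwa [det_smul, ← pow_mul] at this

theorem abs_log_det_gram_sub_le {u w : ι → E} (hu : LinearIndependent ℝ u)
    (hw : LinearIndependent ℝ w) {c : ℝ} (hc : 0 < c)
    (huw : ∀ x : ι → ℝ, ‖∑ i, x i • u i‖ ≤ c * ‖∑ i, x i • w i‖)
    (hwu : ∀ x : ι → ℝ, ‖∑ i, x i • w i‖ ≤ c * ‖∑ i, x i • u i‖) :
    |Real.log (gram ℝ u).det - Real.log (gram ℝ w).det| ≤
      2 * Fintype.card ι * Real.log c := by
  have hu0 := (posDef_gram_of_linearIndependent hu).det_pos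
  have hw0 := (posDef_gram_of_linearIndependent hw).det_pos
  have hlog : ∀ {d d' : ℝ}, 0 < d → 0 < d' → d ≤ c ^ (2 * Fintype.card ι) * d' →
      Real.log d - Real.log d' ≤ 2 * Fintype.card ι * Real.log c := fun hd hd' h => by
    have := Real.log_le_log hd h
    rw [Real.log_mul (by positivity) hd'.ne', Real.log_pow] at this
    push_cast at this
    linarith
  exact abs_sub_le_iff.2 ⟨hlog hu0 hw0 (det_gram_le_of_norm_sum_le hw hc huw),
    hlog hw0 hu0 (det_gram_le_of_norm_sum_le hu hc hwu)⟩

end Matrix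

open WithLp

theorem ContinuousLinearEquiv.norm_le_mul_norm_apply {E : Type*} [NormedAddCommGroup E]
    [NormedSpace ℝ E] (X : E ≃L[ℝ] E) {K : ℝ} (hK : ‖(X.symm : E →L[ℝ] E)‖ ≤ K) (z : E) :
    ‖z‖ ≤ K * ‖X z‖ := calc
  ‖z‖ = ‖(X.symm : E →L[ℝ] E) (X z)‖ := by simp
  _ ≤ K * ‖X z‖ := by grw [ContinuousLinearMap.le_opNorm, hK]

section GraphMap

variable {E F G : Type*} [NormedAddCommGroup E] [NormedSpace ℝ E] [NormedAddCommGroup F]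
  [NormedSpace ℝ F] [NormedAddCommGroup G] [NormedSpace ℝ G] (p : ENNReal)

def graphMap (L : E →L[ℝ] F) : E →ₗ[ℝ] WithLp p (E × F) :=
  (WithLp.linearEquiv p ℝ (E × F)).symm.toLinearMap ∘ₗ LinearMap.id.prod L.toLinearMap

variable {p}

@[simp]
theorem graphMap_apply (L : E →L[ℝ] F) (y : E) : graphMap p L y = toLp p (y, L y) := rfl

variable [Fact (1 ≤ p)]

theorem norm_le_norm_graphMap (L : E →L[ℝ] F) (y : E) : ‖y‖ ≤ ‖graphMap p L y‖ :=
  WithLp.norm_fst_le _ (graphMap p L y)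

theorem norm_graphMap_sub_graphMap_le (L L' : E →L[ℝ] F) (y : E) :
    ‖graphMap p L y - graphMap p L' y‖ ≤ ‖L - L'‖ * ‖y‖ := by
  rw [graphMap_apply, graphMap_apply, ← toLp_sub, Prod.mk_sub_mk, sub_self, norm_toLp_snd,
    ← _root_.sub_apply]
  exact (L - L').le_opNorm y

theorem norm_apply_graphMap_le {X Y : WithLp p (E × F) →L[ℝ] G} {K M : ℝ}
    (hX : ∀ z, ‖z‖ ≤ K * ‖X z‖) (hY : ‖Y‖ ≤ M) (L L' : E →L[ℝ] F) (y : E) :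
    ‖Y (graphMap p L' y)‖ ≤ (1 + K * (‖X - Y‖ + M * ‖L - L'‖)) * ‖X (graphMap p L y)‖ := by
  set z := graphMap p L y
  set z' := graphMap p L' y
  have hM : 0 ≤ M := (norm_nonneg Y).trans hY
  have hdiff : ‖X z - Y z'‖ ≤ (‖X - Y‖ + M * ‖L - L'‖) * ‖z‖ := calc
    ‖X z - Y z'‖ = ‖(X - Y) z + Y (z - z')‖ := by simp
    _ ≤ ‖X - Y‖ * ‖z‖ + M * (‖L - L'‖ * ‖z‖) := by
      grw [norm_add_le, (X - Y).le_opNorm, Y.le_opNorm, hY, norm_graphMap_sub_graphMap_le,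
        norm_le_norm_graphMap (p := p) L y]
    _ = (‖X - Y‖ + M * ‖L - L'‖) * ‖z‖ := by ring
  calc ‖Y z'‖ ≤ ‖X z‖ + ‖X z - Y z'‖ := norm_le_norm_add_norm_sub _ _
    _ ≤ ‖X z‖ + (‖X - Y‖ + M * ‖L - L'‖) * (K * ‖X z‖) := by
      grw [hdiff, hX z]
    _ = (1 + K * (‖X - Y‖ + M * ‖L - L'‖)) * ‖X z‖ := by ring

end GraphMap

section GraphBasis

variable {a b : ℕ}

theorem graphBasis_eq_graphMap (L : EuclideanSpace ℝ (Fin a) →L[ℝ] EuclideanSpace ℝ (Fin b))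
    (i : Fin a) : graphBasis L i = graphMap 2 L (EuclideanSpace.single i 1) := rfl

theorem linearIndependent_graphBasis
    (L : EuclideanSpace ℝ (Fin a) →L[ℝ] EuclideanSpace ℝ (Fin b)) :
    LinearIndependent ℝ (graphBasis L) := by
  refine LinearIndependent.of_comp (WithLp.fstₗ 2 ℝ _ _) ?_
  have hfst : WithLp.fstₗ 2 ℝ _ _ ∘ graphBasis L = EuclideanSpace.basisFun (Fin a) ℝ := by
    ext i : 1
    simp [graphBasis]
  rw [hfst]
  exact (EuclideanSpace.basisFun (Fin a) ℝ).orthonormal.linearIndependent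

theorem sum_smul_map_graphBasis (X : EucProd a b →L[ℝ] EucProd a b)
    (L : EuclideanSpace ℝ (Fin a) →L[ℝ] EuclideanSpace ℝ (Fin b)) (x : Fin a → ℝ) :
    ∑ i, x i • X (graphBasis L i) = X (graphMap 2 L (∑ i, x i • EuclideanSpace.single i 1)) := by
  simp [graphBasis_eq_graphMap]

end GraphBasis

section LogJac

variable {a b : ℕ}

theorem linearIndependent_map_graphBasis (X : EucProd a b ≃L[ℝ] EucProd a b)
    (L : EuclideanSpace ℝ (Fin a) →L[ℝ] EuclideanSpace ℝ (Fin b)) :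
    LinearIndependent ℝ (X ∘ graphBasis L) :=
  (linearIndependent_graphBasis L).map' X.toLinearEquiv.toLinearMap X.toLinearEquiv.ker

theorem norm_sum_smul_map_graphBasis_le (X Y : EucProd a b ≃L[ℝ] EucProd a b)
    (L L' : EuclideanSpace ℝ (Fin a) →L[ℝ] EuclideanSpace ℝ (Fin b)) {K M : ℝ}
    (hX : ‖(X : EucProd a b →L[ℝ] EucProd a b)‖ ≤ M)
    (hY' : ‖(Y.symm : EucProd a b →L[ℝ] EucProd a b)‖ ≤ K) (x : Fin a → ℝ) :
    ‖∑ i, x i • (X ∘ graphBasis L) i‖ ≤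
      (1 + K * (‖(Y : EucProd a b →L[ℝ] EucProd a b) - X‖ + M * ‖L' - L‖)) *
        ‖∑ i, x i • (Y ∘ graphBasis L') i‖ := by
  simp only [Function.comp_apply]
  rw [← ContinuousLinearEquiv.coe_coe X, ← ContinuousLinearEquiv.coe_coe Y,
    sum_smul_map_graphBasis, sum_smul_map_graphBasis]
  exact norm_apply_graphMap_le (p := 2) (X := (Y : EucProd a b →L[ℝ] EucProd a b))
    (Y.norm_le_mul_norm_apply hY') hX L' L _

theorem abs_log_det_gram_graphBasis_sub_le (X Y : EucProd a b ≃L[ℝ] EucProd a b)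
    (L L' : EuclideanSpace ℝ (Fin a) →L[ℝ] EuclideanSpace ℝ (Fin b)) {K M : ℝ}
    (hX : ‖(X : EucProd a b →L[ℝ] EucProd a b)‖ ≤ M)
    (hY : ‖(Y : EucProd a b →L[ℝ] EucProd a b)‖ ≤ M)
    (hX' : ‖(X.symm : EucProd a b →L[ℝ] EucProd a b)‖ ≤ K)
    (hY' : ‖(Y.symm : EucProd a b →L[ℝ] EucProd a b)‖ ≤ K) :
    |Real.log (Matrix.gram ℝ (X ∘ graphBasis L)).det -
        Real.log (Matrix.gram ℝ (Y ∘ graphBasis L')).det| ≤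
      2 * a * (K * (‖(X : EucProd a b →L[ℝ] EucProd a b) - Y‖ + M * ‖L - L'‖)) := by
  set η := K * (‖(X : EucProd a b →L[ℝ] EucProd a b) - Y‖ + M * ‖L - L'‖)
  have hη : 0 ≤ η := by
    have := (norm_nonneg _).trans hX
    have := (norm_nonneg _).trans hX'
    positivity
  have hXY := norm_sum_smul_map_graphBasis_le X Y L L' hX hY'
  rw [norm_sub_rev, norm_sub_rev L'] at hXY
  calc _ ≤ 2 * (Fintype.card (Fin a)) * Real.log (1 + η) :=
        Matrix.abs_log_det_gram_sub_le (linearIndependent_map_graphBasis X L)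
          (linearIndependent_map_graphBasis Y L') (by positivity) hXY
          (norm_sum_smul_map_graphBasis_le Y X L' L hY hX')
    _ ≤ 2 * a * η := by
      grw [Real.log_le_sub_one_of_pos (by positivity), Fintype.card_fin, add_sub_cancel_left]

theorem logJac_eq (X : EucProd a b ≃L[ℝ] EucProd a b)
    (L : EuclideanSpace ℝ (Fin a) →L[ℝ] EuclideanSpace ℝ (Fin b)) :
    logJac (X : EucProd a b →L[ℝ] EucProd a b) L =
      (Real.log (Matrix.gram ℝ (X ∘ graphBasis L)).det -
        Real.log (Matrix.gram ℝ (graphBasis L)).det) / 2 := by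
  change 1 / 2 * Real.log ((Matrix.gram ℝ (X ∘ graphBasis L)).det /
    (Matrix.gram ℝ (graphBasis L)).det) = _
  rw [Real.log_div
    (Matrix.posDef_gram_of_linearIndependent (linearIndependent_map_graphBasis X L)).det_pos.ne'
    (Matrix.posDef_gram_of_linearIndependent (linearIndependent_graphBasis L)).det_pos.ne']
  ring

end LogJac

theorem logJac_lipschitz_general (a b : ℕ) (C₀ : ℝ) :
    ∃ N : ℝ, 0 < N ∧ ∀ (A B : EucProd a b ≃L[ℝ] EucProd a b)
      (LE LF : EuclideanSpace ℝ (Fin a) →L[ℝ] EuclideanSpace ℝ (Fin b)),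
      ‖(A : EucProd a b →L[ℝ] EucProd a b)‖ ≤ C₀ →
      ‖(B : EucProd a b →L[ℝ] EucProd a b)‖ ≤ C₀ →
      ‖(A.symm : EucProd a b →L[ℝ] EucProd a b)‖ ≤ C₀ →
      ‖(B.symm : EucProd a b →L[ℝ] EucProd a b)‖ ≤ C₀ →
      |logJac (A : EucProd a b →L[ℝ] EucProd a b) LE -
          logJac (B : EucProd a b →L[ℝ] EucProd a b) LF|
        ≤ N * (‖(A : EucProd a b →L[ℝ] EucProd a b) -
            (B : EucProd a b →L[ℝ] EucProd a b)‖ + ‖LE - LF‖) := by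
  refine ⟨a * (C₀ + 1) ^ 2 + 1, by positivity, fun A B LE LF hA hB hA' hB' => ?_⟩
  have hC₀ : 0 ≤ C₀ := (norm_nonneg _).trans hA
  have hAB := abs_log_det_gram_graphBasis_sub_le A B LE LF hA hB hA' hB'
  have hid := abs_log_det_gram_graphBasis_sub_le (.refl ℝ _) (.refl ℝ _) LE LF
    (K := 1) (M := 1) ContinuousLinearMap.norm_id_le ContinuousLinearMap.norm_id_le
    ContinuousLinearMap.norm_id_le ContinuousLinearMap.norm_id_le
  simp only [ContinuousLinearEquiv.coe_refl', Function.id_comp, sub_self, norm_zero,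
    zero_add, one_mul] at hid
  have hδ : 0 ≤ ‖(A : EucProd a b →L[ℝ] EucProd a b) - B‖ := norm_nonneg _
  have hε : 0 ≤ ‖LE - LF‖ := norm_nonneg _
  have ha : (0 : ℝ) ≤ a := Nat.cast_nonneg a
  rw [logJac_eq, logJac_eq]
  rw [abs_le] at hAB hid ⊢
  constructor <;>
    nlinarith [mul_nonneg ha hδ, mul_nonneg ha hε, mul_nonneg (mul_nonneg ha hC₀) hδ,
      mul_nonneg (mul_nonneg ha hC₀) hε, mul_nonneg (mul_nonneg (mul_nonneg ha hC₀) hC₀) hδ]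

/-- The restricted Jacobian `φ(A,E) = log|det(A|_E)|` is Lipschitz in `(A, E)` on
the set of maps with `‖A‖, ‖A⁻¹‖ ≤ C₀` and subspaces given as graphs. -/
theorem logJac_lipschitz (a b : ℕ) (C₀ : ℝ) (hC₀ : 0 < C₀) :
    ∃ N : ℝ, 0 < N ∧ ∀ (A B : EucProd a b ≃L[ℝ] EucProd a b)
      (LE LF : EuclideanSpace ℝ (Fin a) →L[ℝ] EuclideanSpace ℝ (Fin b)),
      ‖(A : EucProd a b →L[ℝ] EucProd a b)‖ ≤ C₀ →
      ‖(B : EucProd a b →L[ℝ] EucProd a b)‖ ≤ C₀ →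
      ‖(A.symm : EucProd a b →L[ℝ] EucProd a b)‖ ≤ C₀ →
      ‖(B.symm : EucProd a b →L[ℝ] EucProd a b)‖ ≤ C₀ →
      |logJac (A : EucProd a b →L[ℝ] EucProd a b) LE -
          logJac (B : EucProd a b →L[ℝ] EucProd a b) LF|
        ≤ N * (‖(A : EucProd a b →L[ℝ] EucProd a b) -
            (B : EucProd a b →L[ℝ] EucProd a b)‖ + ‖LE - LF‖) :=
  logJac_lipschitz_general a b C₀

end
end
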